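/- If D J_x + X A J_q = I and Aᵀ J_x = 0, with AᵀD⁻¹XA invertible, then J_q = (AᵀD⁻¹XA)⁻¹AᵀD⁻¹ and J_x = D⁻¹(I − XA(AᵀD⁻¹XA)⁻¹AᵀD⁻¹). -/
import Mathlib


open Matrix

theorem jacobian_unique_solution {E R : ℕ}
    (A : Matrix (Fin E) (Fin R) ℝ)
    (D X : Matrix (Fin E) (Fin E) ℝ)
    [Invertible D] [Invertible X] [Invertible (Aᵀ * D⁻¹ * X * A)]
    (Jx : Matrix (Fin E) (Fin E) ℝ) (Jq : Matrix (Fin R) (Fin E) ℝ)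
    (h1 : D * Jx + X * A * Jq = 1) (h2 : Aᵀ * Jx = 0) :
    Jq = (Aᵀ * D⁻¹ * X * A)⁻¹ * Aᵀ * D⁻¹ ∧
      Jx = D⁻¹ * (1 - X * A * (Aᵀ * D⁻¹ * X * A)⁻¹ * Aᵀ * D⁻¹) := by
  have hD : D⁻¹ * D = 1 := Matrix.inv_mul_of_invertible D
  have hJx : Jx = D⁻¹ * (1 - X * A * Jq) := by
    have h : D * Jx = 1 - X * A * Jq := by
      exact (add_sub_cancel_right _ _).symm.trans (by rw [h1])
    calc Jx = D⁻¹ * D * Jx := by rw [hD, Matrix.one_mul]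
      _ = D⁻¹ * (D * Jx) := by rw [Matrix.mul_assoc]
      _ = D⁻¹ * (1 - X * A * Jq) := by rw [h]
  have h3 : Aᵀ * D⁻¹ * X * A * Jq = Aᵀ * D⁻¹ := by
    have := h2
    rw [hJx] at this
    have h4 : Aᵀ * D⁻¹ - Aᵀ * D⁻¹ * (X * A * Jq) = 0 := by
      calc Aᵀ * D⁻¹ - Aᵀ * D⁻¹ * (X * A * Jq)
          = Aᵀ * (D⁻¹ * (1 - X * A * Jq)) := by
            simp only [Matrix.mul_sub, Matrix.mul_one, Matrix.mul_assoc]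
        _ = 0 := this
    have h5 : Aᵀ * D⁻¹ * (X * A * Jq) = Aᵀ * D⁻¹ := by
      have := sub_eq_zero.mp h4
      exact this.symm
    calc Aᵀ * D⁻¹ * X * A * Jq = Aᵀ * D⁻¹ * (X * A * Jq) := by
          simp only [Matrix.mul_assoc]
      _ = Aᵀ * D⁻¹ := h5
  have hJq : Jq = (Aᵀ * D⁻¹ * X * A)⁻¹ * Aᵀ * D⁻¹ := by
    have hM : (Aᵀ * D⁻¹ * X * A)⁻¹ * (Aᵀ * D⁻¹ * X * A) = 1 :=
      Matrix.inv_mul_of_invertible _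
    calc Jq = (Aᵀ * D⁻¹ * X * A)⁻¹ * (Aᵀ * D⁻¹ * X * A) * Jq := by
          rw [hM, Matrix.one_mul]
      _ = (Aᵀ * D⁻¹ * X * A)⁻¹ * (Aᵀ * D⁻¹ * X * A * Jq) := by
          rw [Matrix.mul_assoc]
      _ = (Aᵀ * D⁻¹ * X * A)⁻¹ * (Aᵀ * D⁻¹) := by rw [h3]
      _ = (Aᵀ * D⁻¹ * X * A)⁻¹ * Aᵀ * D⁻¹ := by simp only [Matrix.mul_assoc]
  refine ⟨hJq, ?_⟩
  rw [hJx, hJq]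
  simp only [Matrix.mul_assoc]
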